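/- For every integer n ≥ 0, 4^n·(n+1)(n+2)/2 = Σ_{m=0}^{n} 2^m · Σ_{k=0}^{n−m} C(k+3, 3)·C(2n+4−m, n−m−k). -/
import Mathlib

namespace GWAux

def Row (c : ℕ → ℕ) (N j : ℕ) : ℕ := ∑ k ∈ Finset.range (j+1), c k * N.choose (j - k)

lemma Row_zero (c : ℕ → ℕ) (N : ℕ) : Row c N 0 = c 0 := by simp [Row]

/-- Pascal in the N index -/
lemma Row_col (c : ℕ → ℕ) (N j : ℕ) :
    Row c (N+1) (j+1) = Row c N (j+1) + Row c N j := by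
  unfold Row
  have hsplit : ∑ k ∈ Finset.range (j+1), c k * (N+1).choose (j+1-k)
      = (∑ k ∈ Finset.range (j+1), c k * N.choose (j+1-k))
        + ∑ k ∈ Finset.range (j+1), c k * N.choose (j-k) := by
    rw [← Finset.sum_add_distrib]
    refine Finset.sum_congr rfl fun k hk => ?_
    have h2 : j+1-k = (j-k)+1 := by
      have := Finset.mem_range.mp hk; omega
    rw [h2, Nat.choose_succ_succ, Nat.mul_add, Nat.add_comm]
  rw [Finset.sum_range_succ, Finset.sum_range_succ (fun k => c k * N.choose (j+1-k)), hsplit]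
  simp
  ring

/-- Pascal in the coefficient index -/
lemma Row_coef (t N j : ℕ) :
    Row (fun k => (k+t+1).choose (t+1)) N (j+1) =
      Row (fun k => (k+t+1).choose (t+1)) N j + Row (fun k => (k+t).choose t) N (j+1) := by
  unfold Row
  rw [Finset.sum_range_succ' (fun k => (k+t+1).choose (t+1) * N.choose (j+1-k)),
      Finset.sum_range_succ' (fun k => (k+t).choose t * N.choose (j+1-k))]
  have hsplit : ∑ k ∈ Finset.range (j+1), (k+1+t+1).choose (t+1) * N.choose (j+1-(k+1))
      = (∑ k ∈ Finset.range (j+1), (k+t+1).choose (t+1) * N.choose (j-k))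
        + ∑ k ∈ Finset.range (j+1), (k+1+t).choose t * N.choose (j+1-(k+1)) := by
    rw [← Finset.sum_add_distrib]
    refine Finset.sum_congr rfl fun k hk => ?_
    have h2 : j+1-(k+1) = j-k := by omega
    have h3 : k+1+t+1 = (k+t+1)+1 := by omega
    have h4 : k+1+t = k+t+1 := by omega
    rw [h2, h3, h4, Nat.choose_succ_succ, Nat.add_mul, Nat.add_comm]
  rw [hsplit]
  simp [Nat.choose_self]
  ring

end GWAux

namespace GWAux

def c3 : ℕ → ℕ := fun k => (k+3).choose 3
def c2 : ℕ → ℕ := fun k => (k+2).choose 2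
def c1 : ℕ → ℕ := fun k => (k+1).choose 1
def c0 : ℕ → ℕ := fun k => k.choose 0

lemma Row_arg (c : ℕ → ℕ) {N N' j j' : ℕ} (hN : N = N') (hj : j = j') :
    Row c N j = Row c N' j' := by subst hN; subst hj; rfl

lemma Row_ext {c c' : ℕ → ℕ} (h : ∀ k, c k = c' k) (N j : ℕ) :
    Row c N j = Row c' N j := by
  unfold Row; exact Finset.sum_congr rfl fun k _ => by rw [h]

lemma Row_coef3 (N j : ℕ) : Row c3 N (j+1) = Row c3 N j + Row c2 N (j+1) := by
  have h := Row_coef 2 N j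
  have ha : ∀ k:ℕ, (k+2+1).choose (2+1) = c3 k := by
    intro k; unfold c3; congr 1
  have hb : ∀ k:ℕ, (k+2).choose 2 = c2 k := fun k => rfl
  rw [Row_ext ha, Row_ext ha, Row_ext hb] at h
  exact h

lemma Row_coef2 (N j : ℕ) : Row c2 N (j+1) = Row c2 N j + Row c1 N (j+1) := by
  have h := Row_coef 1 N j
  have ha : ∀ k:ℕ, (k+1+1).choose (1+1) = c2 k := by
    intro k; unfold c2; congr 1
  have hb : ∀ k:ℕ, (k+1).choose 1 = c1 k := fun k => rfl
  rw [Row_ext ha, Row_ext ha, Row_ext hb] at h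
  exact h

lemma Row_coef1 (N j : ℕ) : Row c1 N (j+1) = Row c1 N j + Row c0 N (j+1) := by
  have h := Row_coef 0 N j
  have ha : ∀ k:ℕ, (k+0+1).choose (0+1) = c1 k := by
    intro k; unfold c1; congr 1
  have hb : ∀ k:ℕ, (k+0).choose 0 = c0 k := by
    intro k; unfold c0; congr 1
  rw [Row_ext ha, Row_ext ha, Row_ext hb] at h
  exact h

lemma Row_c0 (N j : ℕ) : Row c0 N j = ∑ i ∈ Finset.range (j+1), N.choose i := by
  unfold Row c0
  simp only [Nat.choose_zero_right, one_mul]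
  have := Finset.sum_range_reflect (fun i => N.choose i) (j+1)
  simpa using this

lemma Row_c0_half (n : ℕ) : Row c0 (2*n+1) n = 4^n := by
  rw [Row_c0]
  exact Nat.sum_range_choose_halfway n

def A (n : ℕ) : ℕ := Row c2 (2*n+3) n

lemma A_rec (n : ℕ) : A (n+1) = 4 * A n + 4^(n+1) := by
  cases n with
  | zero => decide
  | succ p =>
    have e0 : A (p+2) = Row c2 (2*p+6) (p+2) + Row c2 (2*p+6) (p+1) := by
      have h := Row_col c2 (2*p+6) (p+1)
      calc A (p+2) = Row c2 ((2*p+6)+1) ((p+1)+1) := Row_arg c2 (by omega) (by omega)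
        _ = Row c2 (2*p+6) ((p+1)+1) + Row c2 (2*p+6) (p+1) := h
        _ = Row c2 (2*p+6) (p+2) + Row c2 (2*p+6) (p+1) := by
              rw [Row_arg c2 (rfl : 2*p+6 = 2*p+6) (show (p+1)+1 = p+2 by omega)]
    have e1 : Row c2 (2*p+6) (p+2) = Row c2 (2*p+5) (p+2) + Row c2 (2*p+5) (p+1) := by
      have h := Row_col c2 (2*p+5) (p+1)
      calc Row c2 (2*p+6) (p+2) = Row c2 ((2*p+5)+1) ((p+1)+1) :=
            Row_arg c2 (by omega) (by omega)
        _ = Row c2 (2*p+5) ((p+1)+1) + Row c2 (2*p+5) (p+1) := h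
        _ = Row c2 (2*p+5) (p+2) + Row c2 (2*p+5) (p+1) := by
              rw [Row_arg c2 (rfl : 2*p+5 = 2*p+5) (show (p+1)+1 = p+2 by omega)]
    have e2 : Row c2 (2*p+6) (p+1) = Row c2 (2*p+5) (p+1) + Row c2 (2*p+5) p := by
      have h := Row_col c2 (2*p+5) p
      calc Row c2 (2*p+6) (p+1) = Row c2 ((2*p+5)+1) (p+1) :=
            Row_arg c2 (by omega) rfl
        _ = Row c2 (2*p+5) (p+1) + Row c2 (2*p+5) p := h
    have e3 : Row c2 (2*p+5) (p+2) = Row c2 (2*p+5) (p+1) + Row c1 (2*p+5) (p+2) := by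
      have h := Row_coef2 (2*p+5) (p+1)
      calc Row c2 (2*p+5) (p+2) = Row c2 (2*p+5) ((p+1)+1) := Row_arg c2 rfl (by omega)
        _ = Row c2 (2*p+5) (p+1) + Row c1 (2*p+5) ((p+1)+1) := h
        _ = Row c2 (2*p+5) (p+1) + Row c1 (2*p+5) (p+2) := by
              rw [Row_arg c1 (rfl : 2*p+5 = 2*p+5) (show (p+1)+1 = p+2 by omega)]
    have e4 : Row c2 (2*p+5) (p+1) = Row c2 (2*p+5) p + Row c1 (2*p+5) (p+1) :=
      Row_coef2 (2*p+5) p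
    have e5 : Row c1 (2*p+5) (p+2) = Row c1 (2*p+5) (p+1) + Row c0 (2*p+5) (p+2) := by
      have h := Row_coef1 (2*p+5) (p+1)
      calc Row c1 (2*p+5) (p+2) = Row c1 (2*p+5) ((p+1)+1) := Row_arg c1 rfl (by omega)
        _ = Row c1 (2*p+5) (p+1) + Row c0 (2*p+5) ((p+1)+1) := h
        _ = Row c1 (2*p+5) (p+1) + Row c0 (2*p+5) (p+2) := by
              rw [Row_arg c0 (rfl : 2*p+5 = 2*p+5) (show (p+1)+1 = p+2 by omega)]
    have e6 : Row c0 (2*p+5) (p+2) = 4^(p+2) := by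
      have := Row_c0_half (p+2)
      calc Row c0 (2*p+5) (p+2) = Row c0 (2*(p+2)+1) (p+2) := Row_arg c0 (by omega) rfl
        _ = 4^(p+2) := this
    have e7 : A (p+1) = Row c2 (2*p+5) (p+1) := Row_arg c2 (by omega) rfl
    have hgoal : p+1+1 = p+2 := by omega
    rw [hgoal]
    omega

lemma A_val (n : ℕ) : A n = 4^n * (n+1) := by
  induction n with
  | zero => decide
  | succ p ih =>
    rw [A_rec, ih, pow_succ]
    ring

def G (n j : ℕ) : ℕ := Row c3 (n+j+4) j

lemma G_zero (n : ℕ) : G n 0 = 1 := by simp [G, Row, c3]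

lemma G_pascal (n j : ℕ) : G (n+1) (j+1) = G n (j+1) + G (n+1) j := by
  have h := Row_col c3 (n+j+5) j
  calc G (n+1) (j+1) = Row c3 ((n+j+5)+1) (j+1) := Row_arg c3 (by omega) rfl
    _ = Row c3 (n+j+5) (j+1) + Row c3 (n+j+5) j := h
    _ = G n (j+1) + G (n+1) j := by
        rw [Row_arg c3 (show n+j+5 = n+(j+1)+4 by omega) rfl,
            Row_arg c3 (show n+j+5 = (n+1)+j+4 by omega) rfl]
        rfl

lemma E_lemma (n : ℕ) : 2 * G n (n+1) = G (n+1) (n+1) + 4^(n+1) * (n+2) := by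
  have hg : G (n+1) (n+1) = G n (n+1) + Row c3 (2*n+5) n := by
    have h := Row_col c3 (2*n+5) n
    calc G (n+1) (n+1) = Row c3 ((2*n+5)+1) (n+1) := Row_arg c3 (by omega) rfl
      _ = Row c3 (2*n+5) (n+1) + Row c3 (2*n+5) n := h
      _ = G n (n+1) + Row c3 (2*n+5) n := by
          rw [Row_arg c3 (show 2*n+5 = n+(n+1)+4 by omega) rfl]
          rfl
  have hc : G n (n+1) = Row c3 (2*n+5) n + A (n+1) := by
    have h := Row_coef3 (2*n+5) n
    calc G n (n+1) = Row c3 (2*n+5) (n+1) := Row_arg c3 (by omega) rfl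
      _ = Row c3 (2*n+5) n + Row c2 (2*n+5) (n+1) := h
      _ = Row c3 (2*n+5) n + A (n+1) := by
          rw [show Row c2 (2*n+5) (n+1) = A (n+1) from
            Row_arg c2 (by omega) rfl |>.symm]
  have hA : A (n+1) = 4^(n+1) * (n+2) := by
    have := A_val (n+1)
    rwa [show (n+1)+1 = n+2 by omega] at this
  omega

def T (n : ℕ) : ℕ := ∑ j ∈ Finset.range (n+1), 2^(n-j) * G n j

lemma T_rec (n : ℕ) : T (n+1) + G (n+1) (n+1) = 4 * T n + 2 * G n (n+1) := by
  set S1 := ∑ j ∈ Finset.range (n+1), 2^(n-j) * G n (j+1) with hS1def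
  set S2 := ∑ j ∈ Finset.range (n+1), 2^(n-j) * G (n+1) j with hS2def
  set S0 := ∑ j ∈ Finset.range n, 2^(n-(j+1)) * G n (j+1) with hS0def
  have h1 : T (n+1) = S1 + S2 + 2^(n+1) := by
    unfold T
    rw [Finset.sum_range_succ' (fun j => 2^(n+1-j) * G (n+1) j)]
    have hterm : ∀ j ∈ Finset.range (n+1),
        2^(n+1-(j+1)) * G (n+1) (j+1)
          = 2^(n-j) * G n (j+1) + 2^(n-j) * G (n+1) j := by
      intro j hj
      have e : n+1-(j+1) = n-j := by omega
      rw [e, G_pascal, Nat.mul_add]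
    rw [Finset.sum_congr rfl hterm, Finset.sum_add_distrib, G_zero]
    simp [hS1def, hS2def]
  have h2 : T (n+1) = 2 * S2 + G (n+1) (n+1) := by
    unfold T
    rw [Finset.sum_range_succ]
    have hterm : ∀ j ∈ Finset.range (n+1),
        2^(n+1-j) * G (n+1) j = 2 * (2^(n-j) * G (n+1) j) := by
      intro j hj
      have hj' : j ≤ n := by
        have := Finset.mem_range.mp hj; omega
      have e : n+1-j = (n-j)+1 := by omega
      rw [e, pow_succ]
      ring
    rw [Finset.sum_congr rfl hterm, ← Finset.mul_sum, Nat.sub_self]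
    simp [hS2def]
  have hT : T n = S0 + 2^n := by
    unfold T
    rw [Finset.sum_range_succ' (fun j => 2^(n-j) * G n j), G_zero, Nat.sub_zero]
    simp [hS0def]
  have hS1 : S1 = 2 * S0 + G n (n+1) := by
    rw [hS1def, Finset.sum_range_succ, Nat.sub_self]
    have hterm : ∀ j ∈ Finset.range n,
        2^(n-j) * G n (j+1) = 2 * (2^(n-(j+1)) * G n (j+1)) := by
      intro j hj
      have hj' : j < n := Finset.mem_range.mp hj
      have e : n-j = (n-(j+1))+1 := by omega
      rw [e, pow_succ]
      ring
    rw [Finset.sum_congr rfl hterm, ← Finset.mul_sum]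
    simp [hS0def]
  omega

lemma T_val (n : ℕ) : 2 * T n = 4^n * (n+1) * (n+2) := by
  induction n with
  | zero => simp [T, G_zero]
  | succ p ih =>
    have h1 := T_rec p
    have h2 := E_lemma p
    have h3 : T (p+1) = 4 * T p + 4^(p+1) * (p+2) := by omega
    have key : 4 * (4^p * (p+1) * (p+2)) + 2 * (4^(p+1) * (p+2))
        = 4^(p+1) * (p+1+1) * (p+1+2) := by
      rw [pow_succ]; ring
    calc 2 * T (p+1) = 4 * (2 * T p) + 2 * (4^(p+1) * (p+2)) := by rw [h3]; ring
      _ = 4 * (4^p * (p+1) * (p+2)) + 2 * (4^(p+1) * (p+2)) := by rw [ih]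
      _ = 4^(p+1) * (p+1+1) * (p+1+2) := key

lemma sum_eq_T (n : ℕ) :
    (∑ m ∈ Finset.range (n+1), 2^m *
      ∑ k ∈ Finset.range (n-m+1),
        (k+3).choose 3 * (2*n+4-m).choose (n-m-k)) = T n := by
  unfold T
  rw [← Finset.sum_range_reflect (fun j => 2^(n-j) * G n j) (n+1)]
  refine Finset.sum_congr rfl fun m hm => ?_
  have hm' : m ≤ n := by
    have := Finset.mem_range.mp hm; omega
  have e1 : n+1-1-m = n-m := by omega
  rw [e1]
  have e2 : n-(n-m) = m := by omega
  rw [e2]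
  unfold G Row c3
  have e3 : n+(n-m)+4 = 2*n+4-m := by omega
  rw [e3]

end GWAux

theorem two_computations_of_GW (n : ℕ) :
    (4 ^ n * (n + 1) * (n + 2) / 2 : ℚ) =
      ∑ m ∈ Finset.range (n + 1), 2 ^ m *
        ∑ k ∈ Finset.range (n - m + 1),
          (((k + 3).choose 3 : ℚ) * ((2 * n + 4 - m).choose (n - m - k) : ℚ)) := by
  have h1 := GWAux.sum_eq_T n
  have h2 := GWAux.T_val n
  have hcast : (∑ m ∈ Finset.range (n + 1), 2 ^ m *
        ∑ k ∈ Finset.range (n - m + 1),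
          (((k + 3).choose 3 : ℚ) * ((2 * n + 4 - m).choose (n - m - k) : ℚ)))
      = ((∑ m ∈ Finset.range (n+1), 2^m *
          ∑ k ∈ Finset.range (n-m+1),
            (k+3).choose 3 * (2*n+4-m).choose (n-m-k) : ℕ) : ℚ) := by
    push_cast
    rfl
  rw [hcast, h1]
  have h2q : (2 : ℚ) * (GWAux.T n : ℚ) = (4:ℚ)^n * (n+1) * (n+2) := by
    exact_mod_cast h2
  rw [div_eq_iff (by norm_num : (2:ℚ) ≠ 0)]
  linarith
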